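/- The improper integral A = ∫₀^{a₊} (1/(1−x))·√( x / (3(x+1)(a₊−x)(x−a₋)) ) dx converges and satisfies 3/50 ≤ A ≤ 3/10; in particular A < π·√(2/21). -/

import Mathlib

/-!
On `[0, a₊]` the integrand factors as `φ(x) · (a₊ - x)^(-1/2)`, where
`φ(x) = (1/(1-x)) · √(x / (3(x+1)(x-a₋)))` is bounded: `0 ≤ φ ≤ 0.32` on `[0, a₊]`
and `φ ≥ 0.138` on `[1/10, a₊]`. Since `∫ₐ^{a₊} (a₊ - x)^(-1/2) dx = 2√(a₊ - a)`, this gives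
integrability and `0.276 √(a₊ - 1/10) ≤ A ≤ 0.64 √a₊`, and `a₊ ≈ 0.2071` does the rest.
-/

noncomputable section

def aplus : ℝ := -(1 / 2) + Real.sqrt 2 / 2
def aminus : ℝ := -(1 / 2) - Real.sqrt 2 / 2

/-- The integrand `(1/(1-x))·√( x / (3(x+1)(a₊-x)(x-a₋)) )`. -/
def sepIntegrand (x : ℝ) : ℝ :=
  1 / (1 - x) * Real.sqrt (x / (3 * (x + 1) * (aplus - x) * (x - aminus)))

/-- The constant `A = ∫₀^{a₊} (1/(1-x))·√( x / (3(x+1)(a₊-x)(x-a₋)) ) dx`. -/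
def Aconst : ℝ := ∫ x in (0 : ℝ)..aplus, sepIntegrand x

open Real Set MeasureTheory intervalIntegral

theorem intervalIntegrable_sub_rpow_neg_half (a b : ℝ) :
    IntervalIntegrable (fun x => (b - x) ^ (-(1 / 2) : ℝ)) volume a b := by
  simpa using (intervalIntegrable_rpow' (a := b - a) (b := 0)
    (by norm_num : (-1 : ℝ) < -(1 / 2))).comp_sub_left b

theorem integral_sub_rpow_neg_half (a b : ℝ) :
    ∫ x in a..b, (b - x) ^ (-(1 / 2) : ℝ) = 2 * √(b - a) := by
  rw [integral_comp_sub_left (fun y => y ^ (-(1 / 2) : ℝ)),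
    integral_rpow (Or.inl (by norm_num))]
  norm_num [sqrt_eq_rpow]
  ring

lemma aminus_eq : aminus = -1 - aplus := by
  unfold aminus aplus
  ring

lemma le_aplus : (0.207 : ℝ) ≤ aplus := by
  have : (1.414 : ℝ) ≤ √2 := (le_sqrt (by norm_num) (by norm_num)).2 (by norm_num)
  unfold aplus
  linarith

lemma aplus_le : aplus ≤ 0.2075 := by
  have : √2 ≤ 1.415 := (sqrt_le_left (by norm_num)).2 (by norm_num)
  unfold aplus
  linarith

def sepFactor (x : ℝ) : ℝ :=
  1 / (1 - x) * √(x / (3 * (x + 1) * (x - aminus)))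

variable {x : ℝ}

lemma sepIntegrand_eq_sepFactor_mul (hx : x ∈ Icc 0 aplus) :
    sepIntegrand x = sepFactor x * (aplus - x) ^ (-(1 / 2) : ℝ) := by
  obtain ⟨hx0, hxa⟩ := hx
  have hD : 0 ≤ 3 * (x + 1) * (x - aminus) := by nlinarith [aminus_eq, le_aplus]
  have hsplit : x / (3 * (x + 1) * (aplus - x) * (x - aminus))
      = x / (3 * (x + 1) * (x - aminus)) / (aplus - x) := by
    rw [div_div]
    congr 1
    ring
  rw [sepIntegrand, sepFactor, hsplit, sqrt_div (div_nonneg hx0 hD),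
    rpow_neg (sub_nonneg.2 hxa), ← sqrt_eq_rpow]
  ring

lemma sepFactor_le (hx : x ∈ Icc 0 aplus) : sepFactor x ≤ 0.32 := by
  obtain ⟨hx0, hxa⟩ := hx
  have ha := aplus_le
  have hD : 3.6 ≤ 3 * (x + 1) * (x - aminus) := by nlinarith [aminus_eq, le_aplus]
  have hpole : 1 / (1 - x) ≤ 1.27 := by
    rw [div_le_iff₀ (by linarith)]
    linarith
  have hroot : √(x / (3 * (x + 1) * (x - aminus))) ≤ 1 / 4 := by
    rw [sqrt_le_left (by norm_num), div_le_iff₀ (by linarith)]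
    linarith
  calc sepFactor x ≤ 1.27 * (1 / 4) :=
        mul_le_mul hpole hroot (sqrt_nonneg _) (by norm_num)
    _ ≤ 0.32 := by norm_num

lemma le_sepFactor (hx : x ∈ Icc (1 / 10) aplus) : 0.138 ≤ sepFactor x := by
  obtain ⟨hx1, hxa⟩ := hx
  have ha := aplus_le
  have hD : 3 * (x + 1) * (x - aminus) ≤ 5.2 := by nlinarith [aminus_eq, le_aplus]
  have hpole : 1 ≤ 1 / (1 - x) := by
    rw [le_div_iff₀ (by linarith)]
    linarith
  have hDpos : 0 < 3 * (x + 1) * (x - aminus) := by nlinarith [aminus_eq]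
  have hroot : 0.138 ≤ √(x / (3 * (x + 1) * (x - aminus))) := by
    rw [le_sqrt (by norm_num) (div_nonneg (by linarith) hDpos.le), le_div_iff₀ hDpos]
    nlinarith
  calc (0.138 : ℝ) = 1 * 0.138 := (one_mul _).symm
    _ ≤ sepFactor x := mul_le_mul hpole hroot (by norm_num) (by linarith)

lemma sepIntegrand_nonneg (hx : x ∈ Icc 0 aplus) : 0 ≤ sepIntegrand x :=
  mul_nonneg (one_div_nonneg.2 (by linarith [hx.2, aplus_le])) (sqrt_nonneg _)

lemma sepIntegrand_le (hx : x ∈ Icc 0 aplus) :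
    sepIntegrand x ≤ 0.32 * (aplus - x) ^ (-(1 / 2) : ℝ) := by
  rw [sepIntegrand_eq_sepFactor_mul hx]
  exact mul_le_mul_of_nonneg_right (sepFactor_le hx) (rpow_nonneg (sub_nonneg.2 hx.2) _)

lemma le_sepIntegrand (hx : x ∈ Icc (1 / 10) aplus) :
    0.138 * (aplus - x) ^ (-(1 / 2) : ℝ) ≤ sepIntegrand x := by
  rw [sepIntegrand_eq_sepFactor_mul ⟨by linarith [hx.1], hx.2⟩]
  exact mul_le_mul_of_nonneg_right (le_sepFactor hx) (rpow_nonneg (sub_nonneg.2 hx.2) _)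

lemma intervalIntegrable_sepIntegrand : IntervalIntegrable sepIntegrand volume 0 aplus := by
  have hmeas : Measurable sepIntegrand := by
    unfold sepIntegrand
    fun_prop
  refine ((intervalIntegrable_sub_rpow_neg_half 0 aplus).const_mul 0.32).mono_fun'
    hmeas.aestronglyMeasurable ?_
  rw [uIoc_of_le (by linarith [le_aplus])]
  filter_upwards [self_mem_ae_restrict measurableSet_Ioc] with x hx
  have hx : x ∈ Icc 0 aplus := Ioc_subset_Icc_self hx
  rw [norm_eq_abs, abs_of_nonneg (sepIntegrand_nonneg hx)]
  exact sepIntegrand_le hx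

lemma Aconst_le : Aconst ≤ 0.64 * √aplus := by
  calc Aconst ≤ ∫ x in (0 : ℝ)..aplus, 0.32 * (aplus - x) ^ (-(1 / 2) : ℝ) :=
        integral_mono_on (by linarith [le_aplus]) intervalIntegrable_sepIntegrand
          ((intervalIntegrable_sub_rpow_neg_half 0 aplus).const_mul 0.32)
          fun _ hx => sepIntegrand_le hx
    _ = 0.64 * √aplus := by
        rw [intervalIntegral.integral_const_mul, integral_sub_rpow_neg_half, sub_zero]
        ring

lemma le_Aconst : 0.276 * √(aplus - 1 / 10) ≤ Aconst := by
  have h0 : (0 : ℝ) ≤ 1 / 10 := by norm_num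
  have h1 : (1 / 10 : ℝ) ≤ aplus := by linarith [le_aplus]
  calc 0.276 * √(aplus - 1 / 10)
        = ∫ x in (1 / 10 : ℝ)..aplus, 0.138 * (aplus - x) ^ (-(1 / 2) : ℝ) := by
        rw [intervalIntegral.integral_const_mul, integral_sub_rpow_neg_half]
        ring
    _ ≤ ∫ x in (1 / 10 : ℝ)..aplus, sepIntegrand x :=
        integral_mono_on h1 ((intervalIntegrable_sub_rpow_neg_half _ aplus).const_mul 0.138)
          (intervalIntegrable_sepIntegrand.mono_set
            (uIcc_subset_uIcc (mem_uIcc_of_le h0 h1) right_mem_uIcc))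
          fun _ hx => le_sepIntegrand hx
    _ ≤ Aconst := by
        refine integral_mono_interval h0 h1 le_rfl ?_ intervalIntegrable_sepIntegrand
        filter_upwards [self_mem_ae_restrict measurableSet_Ioc] with x hx
        exact sepIntegrand_nonneg (Ioc_subset_Icc_self hx)

/-- The improper integral defining `A` converges, and
`3/50 ≤ A ≤ 3/10`; in particular `A < π√(2/21)`. -/
theorem stmt2 :
    IntervalIntegrable sepIntegrand MeasureTheory.volume 0 aplus ∧
    3 / 50 ≤ Aconst ∧ Aconst ≤ 3 / 10 ∧ Aconst < Real.pi * Real.sqrt (2 / 21) := by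
  have hup : √aplus ≤ 0.456 := (sqrt_le_left (by norm_num)).2 (by linarith [aplus_le])
  have hlo : 0.327 ≤ √(aplus - 1 / 10) :=
    (le_sqrt (by norm_num) (by linarith [le_aplus])).2 (by linarith [le_aplus])
  have hroot : 0.3 ≤ √(2 / 21) := (le_sqrt (by norm_num) (by norm_num)).2 (by norm_num)
  have hA : Aconst ≤ 3 / 10 := by linarith [Aconst_le]
  refine ⟨intervalIntegrable_sepIntegrand, by linarith [le_Aconst], hA, ?_⟩
  nlinarith [pi_gt_three]
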